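/- Let α, β ∈ (0,π) and φ, ξ ∈ [0,2π), and define u₀, u₁, v₀, v₁ ∈ ℂ² and the unit vector ψ_Hardy ∈ ℂ²⊗ℂ² as follows: u₀ = C_α|0⟩ + e^{iφ}S_α|1⟩, u₁ = −S_α|0⟩ + e^{iφ}C_α|1⟩, v₀ = C_β|0⟩ + e^{iξ}S_β|1⟩, v₁ = −S_β|0⟩ + e^{iξ}C_β|1⟩, and ψ_Hardy := (T_α·u₀⊗v₁ + T_β·u₁⊗v₀ + u₁⊗v₁)/√(1+T_α²+T_β²). If ρ is a positive semidefinite operator on ℂ²⊗ℂ² with trace 1 satisfying ⟨|0⟩⊗v₁, ρ(|0⟩⊗v₁)⟩ = 0, ⟨u₁⊗|0⟩, ρ(u₁⊗|0⟩)⟩ = 0, and ⟨u₀⊗v₀, ρ(u₀⊗v₀)⟩ = 0, then ρ is the rank-one orthogonal projection onto the line spanned by ψ_Hardy. -/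

import Mathlib

open Real Complex Matrix ComplexOrder

noncomputable section

/-- Computational basis vector `|0⟩` of a qubit. -/
def ket0 : Fin 2 → ℂ := fun i => if i = 0 then 1 else 0

/-- Computational basis vector `|1⟩` of a qubit. -/
def ket1 : Fin 2 → ℂ := fun i => if i = 1 then 1 else 0

/-- Tensor product of two qubit vectors, as a vector in `ℂ²⊗ℂ² ≅ ℂ⁴`. -/
def tensor (u v : Fin 2 → ℂ) : Fin 2 × Fin 2 → ℂ := fun p => u p.1 * v p.2

/-!
Since `ρ` is positive semidefinite, `⟨w, ρ w⟩ = 0` forces `ρ w = 0`, so `ρ` annihilates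
`|0⟩⊗v₁`, `u₁⊗|0⟩` and `u₀⊗v₀`. Their Gram matrix has determinant `1 - (S_α S_β)²`, which is
nonzero, and all three are orthogonal to the unit vector `ψ_Hardy`; hence together with
`ψ_Hardy` they span `ℂ⁴`. A Hermitian matrix that vanishes on the orthogonal complement of a
unit vector `ψ` is a multiple of `|ψ⟩⟨ψ|`, and `tr ρ = 1` fixes the multiple to be `1`.
-/

open scoped ComplexConjugate

section DotProduct

variable {n : Type*} [Fintype n]

theorem eq_zero_of_forall_star_dotProduct_eq_zero {s : Set (n → ℂ)}
    (hs : Submodule.span ℂ s = ⊤) {a : n → ℂ} (h : ∀ x ∈ s, star x ⬝ᵥ a = 0) : a = 0 := by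
  have : dotProductBilin ℂ ℂ (star a) = 0 :=
    LinearMap.ext_on hs fun x hx => by simp [star_dotProduct, h x hx]
  simpa using LinearMap.congr_fun this a

theorem Matrix.ext_of_star_dotProduct_mulVec [DecidableEq n] {s : Set (n → ℂ)}
    (hs : Submodule.span ℂ s = ⊤) {A B : Matrix n n ℂ}
    (h : ∀ x ∈ s, ∀ y ∈ s, star x ⬝ᵥ A *ᵥ y = star x ⬝ᵥ B *ᵥ y) : A = B := by
  refine toLin'.injective <| LinearMap.ext_on hs fun y hy => ?_
  refine sub_eq_zero.mp <| eq_zero_of_forall_star_dotProduct_eq_zero hs fun x hx => ?_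
  simp [dotProduct_sub, h x hx y hy]

theorem linearIndependent_of_det_dotProduct_gram_ne_zero {ι : Type*} [Fintype ι] [DecidableEq ι]
    {v : ι → n → ℂ} (h : (of fun i j => star (v i) ⬝ᵥ v j).det ≠ 0) :
    LinearIndependent ℂ v := by
  rw [Fintype.linearIndependent_iff]
  intro g hg
  refine congrFun (eq_zero_of_mulVec_eq_zero h ?_)
  ext i
  have := congrArg (star (v i) ⬝ᵥ ·) hg
  simp only [dotProduct_sum, dotProduct_smul, smul_eq_mul, dotProduct_zero] at this
  simpa [mulVec, dotProduct, mul_comm] using this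

theorem LinearIndependent.finCons_of_star_dotProduct_eq_zero {k : ℕ} {w : Fin k → n → ℂ}
    (hw : LinearIndependent ℂ w) {x : n → ℂ} (hx : x ≠ 0) (hxw : ∀ i, star x ⬝ᵥ w i = 0) :
    LinearIndependent ℂ (Fin.cons x w : Fin (k + 1) → n → ℂ) := by
  refine hw.finCons fun hmem => hx (dotProduct_star_self_eq_zero.mp ?_)
  have hker : Submodule.span ℂ (Set.range w) ≤ LinearMap.ker (dotProductBilin ℂ ℂ (star x)) :=
    Submodule.span_le.mpr (Set.range_subset_iff.mpr hxw)
  exact hker hmem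

theorem Matrix.IsHermitian.eq_vecMulVec_of_mulVec_eq_zero [DecidableEq n]
    {ρ : Matrix n n ℂ} (hρ : ρ.IsHermitian) (htr : ρ.trace = 1) {ψ : n → ℂ}
    (hψ : star ψ ⬝ᵥ ψ = 1) {S : Set (n → ℂ)} (hρS : ∀ w ∈ S, ρ *ᵥ w = 0)
    (hψS : ∀ w ∈ S, star ψ ⬝ᵥ w = 0) (hspan : Submodule.span ℂ (insert ψ S) = ⊤) :
    ρ = vecMulVec ψ (star ψ) := by
  set t := star ψ ⬝ᵥ ρ *ᵥ ψ
  have hSψ : ∀ w ∈ S, star w ⬝ᵥ ψ = 0 := fun w hw => by rw [star_dotProduct, hψS w hw, star_zero]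
  have hSρ : ∀ w ∈ S, star w ᵥ* ρ = 0 := fun w hw => by
    rw [← hρ.eq, ← star_mulVec, hρS w hw, star_zero]
  have hρ_eq : ρ = t • vecMulVec ψ (star ψ) := by
    refine ext_of_star_dotProduct_mulVec hspan ?_
    rintro x (rfl | hx) y (rfl | hy)
    · simp [smul_mulVec, vecMulVec_mulVec, hψ, t]
    · simp [smul_mulVec, vecMulVec_mulVec, hψS y hy, hρS y hy]
    · simp [smul_mulVec, vecMulVec_mulVec, dotProduct_mulVec, hSρ x hx, hSψ x hx]
    · simp [smul_mulVec, vecMulVec_mulVec, hψS y hy, hρS y hy]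
  have ht : t = 1 := by
    simpa [hρ_eq, trace_vecMulVec, dotProduct_comm ψ, hψ] using htr
  rw [hρ_eq, ht, one_smul]

end DotProduct

theorem star_tensor_dotProduct_tensor (a b c d : Fin 2 → ℂ) :
    star (tensor a b) ⬝ᵥ tensor c d = (star a ⬝ᵥ c) * (star b ⬝ᵥ d) := by
  simp only [tensor, dotProduct, Fintype.sum_prod_type, Fin.sum_univ_two, Pi.star_apply, star_mul']
  ring

@[simp] theorem ket0_apply_zero : ket0 0 = 1 := rfl

@[simp] theorem star_ket0_dotProduct (x : Fin 2 → ℂ) : star ket0 ⬝ᵥ x = x 0 := by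
  simp [dotProduct, ket0]

@[simp] theorem star_dotProduct_ket0 (x : Fin 2 → ℂ) : star x ⬝ᵥ ket0 = star (x 0) := by
  simp [dotProduct, ket0]

theorem conj_exp_I_mul_mul_self (ω : ℝ) : conj (exp (I * ω)) * exp (I * ω) = 1 := by
  rw [mul_comm I, conj_mul', norm_exp_ofReal_mul_I, ofReal_one, one_pow]

theorem ofReal_sin_sq_add_cos_sq (θ : ℝ) : (Real.sin θ : ℂ) ^ 2 + (Real.cos θ : ℂ) ^ 2 = 1 := by
  exact_mod_cast Real.sin_sq_add_cos_sq θ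

/-- The paper's `u₀` is `blochKet (α / 2) φ` and `u₁` is `blochKetOrth (α / 2) φ`. -/
def blochKet (θ ω : ℝ) : Fin 2 → ℂ :=
  (Real.cos θ : ℂ) • ket0 + (exp (I * ω) * Real.sin θ) • ket1

def blochKetOrth (θ ω : ℝ) : Fin 2 → ℂ :=
  (-(Real.sin θ : ℂ)) • ket0 + (exp (I * ω) * Real.cos θ) • ket1

section Bloch

variable (θ ω : ℝ)

@[simp] theorem blochKet_apply_zero : blochKet θ ω 0 = Real.cos θ := by
  simp [blochKet, ket0, ket1]

@[simp] theorem blochKet_apply_one : blochKet θ ω 1 = exp (I * ω) * Real.sin θ := by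
  simp [blochKet, ket0, ket1]

@[simp] theorem blochKetOrth_apply_zero : blochKetOrth θ ω 0 = -Real.sin θ := by
  simp [blochKetOrth, ket0, ket1]

@[simp] theorem blochKetOrth_apply_one : blochKetOrth θ ω 1 = exp (I * ω) * Real.cos θ := by
  simp [blochKetOrth, ket0, ket1]

@[simp] theorem star_blochKet_dotProduct_self : star (blochKet θ ω) ⬝ᵥ blochKet θ ω = 1 := by
  simp only [vec2_dotProduct, Pi.star_apply, blochKet_apply_zero, blochKet_apply_one, star_mul',
    Complex.star_def, conj_ofReal]
  linear_combination (Real.sin θ : ℂ) ^ 2 * conj_exp_I_mul_mul_self ω + ofReal_sin_sq_add_cos_sq θ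

@[simp] theorem star_blochKetOrth_dotProduct_self :
    star (blochKetOrth θ ω) ⬝ᵥ blochKetOrth θ ω = 1 := by
  simp only [vec2_dotProduct, Pi.star_apply, blochKetOrth_apply_zero, blochKetOrth_apply_one,
    star_mul', star_neg, Complex.star_def, conj_ofReal]
  linear_combination (Real.cos θ : ℂ) ^ 2 * conj_exp_I_mul_mul_self ω + ofReal_sin_sq_add_cos_sq θ

@[simp] theorem star_blochKet_dotProduct_blochKetOrth :
    star (blochKet θ ω) ⬝ᵥ blochKetOrth θ ω = 0 := by
  simp only [vec2_dotProduct, Pi.star_apply, blochKet_apply_zero, blochKet_apply_one,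
    blochKetOrth_apply_zero, blochKetOrth_apply_one, star_mul', Complex.star_def, conj_ofReal]
  linear_combination (Real.sin θ * Real.cos θ : ℂ) * conj_exp_I_mul_mul_self ω

@[simp] theorem star_blochKetOrth_dotProduct_blochKet :
    star (blochKetOrth θ ω) ⬝ᵥ blochKet θ ω = 0 := by
  rw [star_dotProduct, star_blochKet_dotProduct_blochKetOrth, star_zero]

end Bloch

/-- `ψ_Hardy` in terms of the half-angles `a = α / 2`, `b = β / 2`. -/
def hardyState (a b φ ξ : ℝ) : Fin 2 × Fin 2 → ℂ :=
  ((Real.sqrt (1 + Real.tan a ^ 2 + Real.tan b ^ 2) : ℂ))⁻¹ •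
    ((Real.tan a : ℂ) • tensor (blochKet a φ) (blochKetOrth b ξ) +
      (Real.tan b : ℂ) • tensor (blochKetOrth a φ) (blochKet b ξ) +
      tensor (blochKetOrth a φ) (blochKetOrth b ξ))

section Hardy

variable (a b φ ξ : ℝ)

theorem star_hardyState_dotProduct (x : Fin 2 × Fin 2 → ℂ) :
    star (hardyState a b φ ξ) ⬝ᵥ x =
      ((Real.sqrt (1 + Real.tan a ^ 2 + Real.tan b ^ 2) : ℂ))⁻¹ *
        (Real.tan a * (star (tensor (blochKet a φ) (blochKetOrth b ξ)) ⬝ᵥ x) +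
          Real.tan b * (star (tensor (blochKetOrth a φ) (blochKet b ξ)) ⬝ᵥ x) +
          star (tensor (blochKetOrth a φ) (blochKetOrth b ξ)) ⬝ᵥ x) := by
  simp only [hardyState, star_smul, star_add, smul_dotProduct, add_dotProduct, smul_eq_mul,
    ← ofReal_inv, Complex.star_def, conj_ofReal]

theorem star_hardyState_dotProduct_self :
    star (hardyState a b φ ξ) ⬝ᵥ hardyState a b φ ξ = 1 := by
  have hpos : (0 : ℝ) < 1 + Real.tan a ^ 2 + Real.tan b ^ 2 := by positivity
  have hnorm_sq : ((Real.sqrt (1 + Real.tan a ^ 2 + Real.tan b ^ 2) : ℂ)) ^ 2 =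
      1 + (Real.tan a : ℂ) ^ 2 + (Real.tan b : ℂ) ^ 2 := by
    exact_mod_cast Real.sq_sqrt hpos.le
  have hnorm_ne : ((Real.sqrt (1 + Real.tan a ^ 2 + Real.tan b ^ 2) : ℂ)) ≠ 0 := by
    exact_mod_cast (Real.sqrt_pos.mpr hpos).ne'
  rw [star_hardyState_dotProduct, hardyState]
  simp only [dotProduct_smul, dotProduct_add, star_tensor_dotProduct_tensor, smul_eq_mul,
    star_blochKet_dotProduct_self, star_blochKetOrth_dotProduct_self,
    star_blochKet_dotProduct_blochKetOrth, star_blochKetOrth_dotProduct_blochKet]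
  field_simp
  linear_combination -hnorm_sq

theorem star_hardyState_dotProduct_tensor_ket0_blochKetOrth (ha : Real.cos a ≠ 0) :
    star (hardyState a b φ ξ) ⬝ᵥ tensor ket0 (blochKetOrth b ξ) = 0 := by
  have htan : (Real.tan a : ℂ) * Real.cos a = Real.sin a := by exact_mod_cast Real.tan_mul_cos ha
  rw [star_hardyState_dotProduct]
  simp only [star_tensor_dotProduct_tensor, star_dotProduct_ket0, blochKet_apply_zero,
    blochKetOrth_apply_zero, star_blochKetOrth_dotProduct_self,
    star_blochKet_dotProduct_blochKetOrth, star_neg, Complex.star_def, conj_ofReal]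
  linear_combination ((Real.sqrt (1 + Real.tan a ^ 2 + Real.tan b ^ 2) : ℂ))⁻¹ * htan

theorem star_hardyState_dotProduct_tensor_blochKetOrth_ket0 (hb : Real.cos b ≠ 0) :
    star (hardyState a b φ ξ) ⬝ᵥ tensor (blochKetOrth a φ) ket0 = 0 := by
  have htan : (Real.tan b : ℂ) * Real.cos b = Real.sin b := by exact_mod_cast Real.tan_mul_cos hb
  rw [star_hardyState_dotProduct]
  simp only [star_tensor_dotProduct_tensor, star_dotProduct_ket0, blochKet_apply_zero,
    blochKetOrth_apply_zero, star_blochKetOrth_dotProduct_self,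
    star_blochKet_dotProduct_blochKetOrth, star_neg, Complex.star_def, conj_ofReal]
  linear_combination ((Real.sqrt (1 + Real.tan a ^ 2 + Real.tan b ^ 2) : ℂ))⁻¹ * htan

theorem star_hardyState_dotProduct_tensor_blochKet_blochKet :
    star (hardyState a b φ ξ) ⬝ᵥ tensor (blochKet a φ) (blochKet b ξ) = 0 := by
  rw [star_hardyState_dotProduct]
  simp only [star_tensor_dotProduct_tensor, star_blochKetOrth_dotProduct_blochKet]
  ring

theorem span_insert_hardyState_eq_top (ha : Real.cos a ≠ 0) (hb : Real.cos b ≠ 0) :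
    Submodule.span ℂ (insert (hardyState a b φ ξ) {tensor ket0 (blochKetOrth b ξ),
      tensor (blochKetOrth a φ) ket0, tensor (blochKet a φ) (blochKet b ξ)}) = ⊤ := by
  set w : Fin 3 → Fin 2 × Fin 2 → ℂ := ![tensor ket0 (blochKetOrth b ξ),
    tensor (blochKetOrth a φ) ket0, tensor (blochKet a φ) (blochKet b ξ)]
  set s : ℝ := Real.sin a * Real.sin b
  have hgram : (of fun i j => star (w i) ⬝ᵥ w j) = !![1, (s : ℂ), 0; (s : ℂ), 1, 0; 0, 0, 1] := by
    ext i j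
    fin_cases i <;> fin_cases j <;>
      simp [-vec2_dotProduct, -ofReal_sin, -ofReal_cos, w, s, star_tensor_dotProduct_tensor]
  have hs : s * s < 1 := by
    have hcos : 0 < Real.cos a ^ 2 := by positivity
    nlinarith [Real.sin_sq_add_cos_sq a, Real.sin_sq_add_cos_sq b, sq_nonneg (Real.sin a),
      sq_nonneg (Real.cos b)]
  have hdet : (of fun i j => star (w i) ⬝ᵥ w j).det ≠ 0 := by
    rw [hgram]
    simp [det_fin_three]
    exact_mod_cast (sub_pos.mpr hs).ne'
  have hψ : hardyState a b φ ξ ≠ 0 := fun h => by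
    simpa [h] using star_hardyState_dotProduct_self a b φ ξ
  have hψw : ∀ i, star (hardyState a b φ ξ) ⬝ᵥ w i = 0 := by
    intro i
    fin_cases i
    · exact star_hardyState_dotProduct_tensor_ket0_blochKetOrth a b φ ξ ha
    · exact star_hardyState_dotProduct_tensor_blochKetOrth_ket0 a b φ ξ hb
    · exact star_hardyState_dotProduct_tensor_blochKet_blochKet a b φ ξ
  have hli : LinearIndependent ℂ (Fin.cons (hardyState a b φ ξ) w : Fin 4 → _) :=
    (linearIndependent_of_det_dotProduct_gram_ne_zero hdet).finCons_of_star_dotProduct_eq_zero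
      hψ hψw
  simpa only [w, Fin.range_cons, Matrix.range_cons, Matrix.range_empty, Set.union_empty,
    Set.singleton_union] using hli.span_eq_top_of_card_eq_finrank (by simp)

end Hardy

theorem hardy_state_selftest_two_qubit_general
    (α β φ ξ : ℝ) (hα : α ∈ Set.Ioo 0 π) (hβ : β ∈ Set.Ioo 0 π)
    (u0 u1 v0 v1 : Fin 2 → ℂ)
    (hu0 : u0 = (Real.cos (α / 2) : ℂ) • ket0 + (Complex.exp (Complex.I * φ) * Real.sin (α / 2)) • ket1)
    (hu1 : u1 = (-(Real.sin (α / 2) : ℂ)) • ket0 + (Complex.exp (Complex.I * φ) * Real.cos (α / 2)) • ket1)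
    (hv0 : v0 = (Real.cos (β / 2) : ℂ) • ket0 + (Complex.exp (Complex.I * ξ) * Real.sin (β / 2)) • ket1)
    (hv1 : v1 = (-(Real.sin (β / 2) : ℂ)) • ket0 + (Complex.exp (Complex.I * ξ) * Real.cos (β / 2)) • ket1)
    (ψ : Fin 2 × Fin 2 → ℂ)
    (hψ : ψ = ((Real.sqrt (1 + Real.tan (α / 2) ^ 2 + Real.tan (β / 2) ^ 2) : ℂ))⁻¹ •
        ((Real.tan (α / 2) : ℂ) • tensor u0 v1 + (Real.tan (β / 2) : ℂ) • tensor u1 v0 +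
          tensor u1 v1))
    (ρ : Matrix (Fin 2 × Fin 2) (Fin 2 × Fin 2) ℂ)
    (hρ : ρ.PosSemidef) (hρtr : ρ.trace = 1)
    (h1 : star (tensor ket0 v1) ⬝ᵥ ρ *ᵥ tensor ket0 v1 = 0)
    (h2 : star (tensor u1 ket0) ⬝ᵥ ρ *ᵥ tensor u1 ket0 = 0)
    (h3 : star (tensor u0 v0) ⬝ᵥ ρ *ᵥ tensor u0 v0 = 0) :
    ρ = Matrix.vecMulVec ψ (star ψ) := by
  have hcos : ∀ θ ∈ Set.Ioo 0 π, Real.cos (θ / 2) ≠ 0 := fun θ hθ =>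
    (Real.cos_pos_of_mem_Ioo ⟨by linarith [hθ.1, pi_pos], by linarith [hθ.2]⟩).ne'
  subst hu0 hu1 hv0 hv1 hψ
  refine hρ.isHermitian.eq_vecMulVec_of_mulVec_eq_zero hρtr
    (star_hardyState_dotProduct_self (α / 2) (β / 2) φ ξ) ?_ ?_
    (span_insert_hardyState_eq_top (α / 2) (β / 2) φ ξ (hcos α hα) (hcos β hβ))
  · simp only [Set.mem_insert_iff, Set.mem_singleton_iff, forall_eq_or_imp, forall_eq]
    exact ⟨(hρ.dotProduct_mulVec_zero_iff _).mp h1, (hρ.dotProduct_mulVec_zero_iff _).mp h2,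
      (hρ.dotProduct_mulVec_zero_iff _).mp h3⟩
  · simp only [Set.mem_insert_iff, Set.mem_singleton_iff, forall_eq_or_imp, forall_eq]
    exact ⟨star_hardyState_dotProduct_tensor_ket0_blochKetOrth _ _ φ ξ (hcos α hα),
      star_hardyState_dotProduct_tensor_blochKetOrth_ket0 _ _ φ ξ (hcos β hβ),
      star_hardyState_dotProduct_tensor_blochKet_blochKet _ _ φ ξ⟩

theorem hardy_state_selftest_two_qubit
    (α β φ ξ : ℝ) (hα : α ∈ Set.Ioo 0 π) (hβ : β ∈ Set.Ioo 0 π)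
    (hφ : φ ∈ Set.Ico 0 (2 * π)) (hξ : ξ ∈ Set.Ico 0 (2 * π))
    (u0 u1 v0 v1 : Fin 2 → ℂ)
    (hu0 : u0 = (Real.cos (α / 2) : ℂ) • ket0 + (Complex.exp (Complex.I * φ) * Real.sin (α / 2)) • ket1)
    (hu1 : u1 = (-(Real.sin (α / 2) : ℂ)) • ket0 + (Complex.exp (Complex.I * φ) * Real.cos (α / 2)) • ket1)
    (hv0 : v0 = (Real.cos (β / 2) : ℂ) • ket0 + (Complex.exp (Complex.I * ξ) * Real.sin (β / 2)) • ket1)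
    (hv1 : v1 = (-(Real.sin (β / 2) : ℂ)) • ket0 + (Complex.exp (Complex.I * ξ) * Real.cos (β / 2)) • ket1)
    (ψ : Fin 2 × Fin 2 → ℂ)
    (hψ : ψ = ((Real.sqrt (1 + Real.tan (α / 2) ^ 2 + Real.tan (β / 2) ^ 2) : ℂ))⁻¹ •
        ((Real.tan (α / 2) : ℂ) • tensor u0 v1 + (Real.tan (β / 2) : ℂ) • tensor u1 v0 +
          tensor u1 v1))
    (ρ : Matrix (Fin 2 × Fin 2) (Fin 2 × Fin 2) ℂ)
    (hρ : ρ.PosSemidef) (hρtr : ρ.trace = 1)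
    (h1 : star (tensor ket0 v1) ⬝ᵥ ρ *ᵥ tensor ket0 v1 = 0)
    (h2 : star (tensor u1 ket0) ⬝ᵥ ρ *ᵥ tensor u1 ket0 = 0)
    (h3 : star (tensor u0 v0) ⬝ᵥ ρ *ᵥ tensor u0 v0 = 0) :
    ρ = Matrix.vecMulVec ψ (star ψ) :=
  hardy_state_selftest_two_qubit_general α β φ ξ hα hβ u0 u1 v0 v1 hu0 hu1 hv0 hv1 ψ hψ ρ hρ hρtr h1
    h2 h3

end
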